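/- Let A be a k-algebra and let α : A → A be a k-algebra automorphism. Then there exists exactly one good left transposition s : H_q⊗A → A⊗H_q with s(D_1⊗a) = α(a)⊗D_1 for all a ∈ A; it is given by s(σ^iD_1^jD_2^k⊗a) = α^{j-k}(a)⊗σ^iD_1^jD_2^k for all a ∈ A, i ∈ ℤ and j,k ≥ 0. -/

import Mathlib

open TensorProduct

noncomputable section
namespace Paper

variable {k : Type*} [Field k]

section Combinators

variable {M N P Q M' N' P' M'' : Type*}
  [AddCommMonoid M] [AddCommMonoid N] [AddCommMonoid P] [AddCommMonoid Q]
  [AddCommMonoid M'] [AddCommMonoid N'] [AddCommMonoid P'] [AddCommMonoid M'']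
  [Module k M] [Module k N] [Module k P] [Module k Q]
  [Module k M'] [Module k N'] [Module k P'] [Module k M'']

/-- `(s ⊗ id) ∘ (id ⊗ s)` : braid a pair of factors past `P`. -/
def braidPast (f : N ⊗[k] P →ₗ[k] P ⊗[k] N') (g : M ⊗[k] P →ₗ[k] P ⊗[k] M') :
    (M ⊗[k] N) ⊗[k] P →ₗ[k] P ⊗[k] (M' ⊗[k] N') :=
  (TensorProduct.assoc k P M' N').toLinearMap
    ∘ₗ g.rTensor N'
    ∘ₗ (TensorProduct.assoc k M P N').symm.toLinearMap
    ∘ₗ f.lTensor M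
    ∘ₗ (TensorProduct.assoc k M N P).toLinearMap

def braidUnder (f : M ⊗[k] N →ₗ[k] N' ⊗[k] M') (g : M' ⊗[k] P →ₗ[k] P' ⊗[k] M'') :
    M ⊗[k] (N ⊗[k] P) →ₗ[k] (N' ⊗[k] P') ⊗[k] M'' :=
  (TensorProduct.assoc k N' P' M'').symm.toLinearMap
    ∘ₗ g.lTensor N'
    ∘ₗ (TensorProduct.assoc k N' M' P).toLinearMap
    ∘ₗ f.rTensor P
    ∘ₗ (TensorProduct.assoc k M N P).symm.toLinearMap

def midMap (f : N ⊗[k] P →ₗ[k] P' ⊗[k] N') :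
    (M ⊗[k] N) ⊗[k] (P ⊗[k] Q) →ₗ[k] (M ⊗[k] P') ⊗[k] (N' ⊗[k] Q) :=
  (TensorProduct.assoc k M P' (N' ⊗[k] Q)).symm.toLinearMap
    ∘ₗ ((TensorProduct.assoc k P' N' Q).toLinearMap.lTensor M)
    ∘ₗ ((f.rTensor Q).lTensor M)
    ∘ₗ ((TensorProduct.assoc k N P Q).symm.toLinearMap.lTensor M)
    ∘ₗ (TensorProduct.assoc k M N (P ⊗[k] Q)).toLinearMap

end Combinators

section Hq

variable (k)
variable (H : Type*) [Ring H]

/-- Axiomatisation of the Hopf algebra `H_q`. -/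
structure HqData [HopfAlgebra k H] (q : k) where
  D₁ : H
  D₂ : H
  σ : Hˣ
  D_comm : D₁ * D₂ = D₂ * D₁
  σD₁ : q • ((σ : H) * D₁) = D₁ * (σ : H)
  σD₂ : q • ((σ : H) * D₂) = D₂ * (σ : H)
  comul_D₁ : Coalgebra.comul (R := k) D₁ = D₁ ⊗ₜ[k] (σ : H) + 1 ⊗ₜ[k] D₁
  comul_D₂ : Coalgebra.comul (R := k) D₂ = D₂ ⊗ₜ[k] (1 : H) + (σ : H) ⊗ₜ[k] D₂
  comul_σ : Coalgebra.comul (R := k) ((σ : H)) = (σ : H) ⊗ₜ[k] (σ : H)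
  counit_D₁ : Coalgebra.counit (R := k) D₁ = 0
  counit_D₂ : Coalgebra.counit (R := k) D₂ = 0
  counit_σ : Coalgebra.counit (R := k) ((σ : H)) = 1
  basis_generic : (∀ l : ℕ, 2 ≤ l → ¬ IsPrimitiveRoot q l) →
      ∃ b : Module.Basis (ℤ × ℕ × ℕ) k H,
        ∀ i j m, b (i, j, m) = ((σ ^ i : Hˣ) : H) * D₁ ^ j * D₂ ^ m
  basis_root : ∀ l : ℕ, 2 ≤ l → IsPrimitiveRoot q l →
      D₁ ^ l = 0 ∧ D₂ ^ l = 0 ∧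
      ∃ b : Module.Basis (ℤ × Fin l × Fin l) k H,
        ∀ i j m, b (i, j, m) = ((σ ^ i : Hˣ) : H) * D₁ ^ (j : ℕ) * D₂ ^ (m : ℕ)

variable (A : Type*) [Ring A] [Algebra k A]

/-- A left transposition of a (standard, flip-braided) bialgebra `H` on an algebra `A`. -/
structure IsTransposition [HopfAlgebra k H] (s : H ⊗[k] A ≃ₗ[k] A ⊗[k] H) : Prop where
  unit_H : ∀ a : A, s ((1 : H) ⊗ₜ[k] a) = a ⊗ₜ[k] (1 : H)
  mul_H : s.toLinearMap ∘ₗ (LinearMap.mul' k H).rTensor A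
      = (LinearMap.mul' k H).lTensor A ∘ₗ braidPast s.toLinearMap s.toLinearMap
  counit_compat : (TensorProduct.rid k A).toLinearMap
        ∘ₗ (Coalgebra.counit (R := k) (A := H)).lTensor A ∘ₗ s.toLinearMap
      = (TensorProduct.lid k A).toLinearMap ∘ₗ (Coalgebra.counit (R := k) (A := H)).rTensor A
  comul_compat : (Coalgebra.comul (R := k) (A := H)).lTensor A ∘ₗ s.toLinearMap
      = braidPast s.toLinearMap s.toLinearMap ∘ₗ (Coalgebra.comul (R := k) (A := H)).rTensor A
  unit_A : ∀ h : H, s (h ⊗ₜ[k] (1 : A)) = (1 : A) ⊗ₜ[k] h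
  mul_A : s.toLinearMap ∘ₗ (LinearMap.mul' k A).lTensor H
      = (LinearMap.mul' k A).rTensor H ∘ₗ braidUnder s.toLinearMap s.toLinearMap
  braid_compat : braidPast s.toLinearMap s.toLinearMap
        ∘ₗ (TensorProduct.comm k H H).toLinearMap.rTensor A
      = (TensorProduct.comm k H H).toLinearMap.lTensor A
        ∘ₗ braidPast s.toLinearMap s.toLinearMap

/-- The action `H ⊗ A → A` attached to an algebra morphism `H →ₐ Module.End k A`. -/
def actMap [HopfAlgebra k H] (ρ : H →ₐ[k] Module.End k A) : H ⊗[k] A →ₗ[k] A :=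
  TensorProduct.lift ρ.toLinearMap

/-- `(A, s)` is a left `H`-braided module algebra via the action `ρ`
(braid of `H` = flip). -/
structure IsModuleAlgebra [HopfAlgebra k H] (s : H ⊗[k] A ≃ₗ[k] A ⊗[k] H)
    (ρ : H →ₐ[k] Module.End k A) : Prop where
  compat_s : s.toLinearMap ∘ₗ (actMap k H A ρ).lTensor H
        ∘ₗ (TensorProduct.assoc k H H A).toLinearMap
      = (actMap k H A ρ).rTensor H
        ∘ₗ (TensorProduct.assoc k H A H).symm.toLinearMap
        ∘ₗ s.toLinearMap.lTensor H
        ∘ₗ (TensorProduct.assoc k H H A).toLinearMap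
        ∘ₗ (TensorProduct.comm k H H).toLinearMap.rTensor A
  mul_act : ∀ (h : H) (a b : A), ρ h (a * b)
      = (LinearMap.mul' k A
          ∘ₗ TensorProduct.map (actMap k H A ρ) (actMap k H A ρ)
          ∘ₗ midMap s.toLinearMap)
        ((Coalgebra.comul (R := k) h) ⊗ₜ[k] (a ⊗ₜ[k] b))
  one_act : ∀ h : H, ρ h (1 : A) = Coalgebra.counit (R := k) h • (1 : A)

/-- `s` is a *good* transposition. -/
def GoodTransposition {q : k} [HopfAlgebra k H] (hq : HqData k H q)
    (s : H ⊗[k] A ≃ₗ[k] A ⊗[k] H) : Prop :=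
  ∀ a : A, braidPast s.toLinearMap s.toLinearMap ((hq.D₁ ⊗ₜ[k] hq.D₂) ⊗ₜ[k] a)
    = a ⊗ₜ[k] (hq.D₁ ⊗ₜ[k] hq.D₂)

end Hq


section Crossed

variable {G : Type*} [Group G] {V : Type*} [AddCommGroup V] [Module k V]

variable (G) in
/-- `f` is a normal 2-cocycle on `G` with values in `kˣ`. -/
structure IsCocycle (f : G → G → kˣ) : Prop where
  one_left : ∀ g, f 1 g = 1
  one_right : ∀ g, f g 1 = 1
  cocycle : ∀ g h l, f g h * f (g * h) l = f g (h * l) * f h l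

variable (A : Type*) [Ring A] [Algebra k A]

/-- Axiomatisation of the crossed product `S(V) #_f G`:  `A` is generated by a copy of `V`
(with commuting elements, generating a copy of the symmetric algebra) and elements `w g`,
and is free as a module over the symmetric part with basis `{w g}`. -/
structure CrossedProduct (ρV : Representation k G V) (f : G → G → kˣ) where
  ι : V →ₗ[k] A
  w : G → A
  w_one : w 1 = 1
  ι_comm : ∀ v v', ι v * ι v' = ι v' * ι v
  w_ι : ∀ g v, w g * ι v = ι (ρV g v) * w g
  w_mul : ∀ g h, w g * w h = (f g h : k) • w (g * h)
  isBasis : ∀ {n : ℕ} (bV : Module.Basis (Fin n) k V),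
      ∃ bA : Module.Basis ((Fin n → ℕ) × G) k A,
        ∀ d g, bA (d, g) = (List.ofFn fun i => ι (bV i) ^ d i).prod * w g

namespace CrossedProduct

variable {A} {ρV : Representation k G V} {f : G → G → kˣ}

/-- The product in `A` of the images of a list of elements of `V`. -/
def mon (cp : CrossedProduct A ρV f) (l : List V) : A := (l.map cp.ι).prod

/-- `v₁ ⋯ v_{j-1}` : the image of the prefix of a monomial. -/
def pre (cp : CrossedProduct A ρV f) {m : ℕ} (v : Fin m → V) (j : Fin m) : A :=
  cp.mon ((List.ofFn v).take j)

/-- `v_{j+1} ⋯ v_m` : the image of the suffix of a monomial. -/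
def suf (cp : CrossedProduct A ρV f) {m : ℕ} (v : Fin m → V) (j : Fin m) : A :=
  cp.mon ((List.ofFn v).drop (j + 1))

/-- The subalgebra `S(V)` of the crossed product. -/
def SV (cp : CrossedProduct A ρV f) : Subalgebra k A :=
  Algebra.adjoin k (Set.range cp.ι)

/-- The subalgebra `S(W)` of the crossed product, for a subspace `W ≤ V`. -/
def SW (cp : CrossedProduct A ρV f) (W : Submodule k V) : Subalgebra k A :=
  Algebra.adjoin k (cp.ι '' (W : Set V))

end CrossedProduct

/-- A linear endomorphism of `V` is `k[G]`-linear if it commutes with the `G`-action. -/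
def GLinear (ρV : Representation k G V) (φ : V →ₗ[k] V) : Prop :=
  ∀ g v, φ (ρV g v) = ρV g (φ v)

variable (G) in
/-- `χ : G → kˣ` is a group homomorphism. -/
def IsCharacter (χ : G → kˣ) : Prop := ∀ g h, χ (g * h) = χ g * χ h

section Defs

variable {H : Type*} [Ring H] [HopfAlgebra k H] {q : k}
variable {ρV : Representation k G V} {f : G → G → kˣ}

/-- `s` is the (good) transposition of `H_q` on `A` associated with the automorphism `α`. -/
def AssocTransposition (hq : HqData k H q)
    (s : H ⊗[k] A ≃ₗ[k] A ⊗[k] H) (α : A ≃ₐ[k] A) : Prop :=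
  IsTransposition k H A s ∧ GoodTransposition k H A hq s
    ∧ (∀ a : A, s (hq.D₁ ⊗ₜ[k] a) = α a ⊗ₜ[k] hq.D₁)
    ∧ (∀ a : A, s (hq.D₂ ⊗ₜ[k] a) = α.symm a ⊗ₜ[k] hq.D₂)

variable {A}

/-- `ς` is the endomorphism of `A` determined by `ς̂` and `χ_ς`. -/
def SigmaDef (cp : CrossedProduct A ρV f) (ςhat : V →ₗ[k] V) (χς : G → kˣ)
    (ς : Module.End k A) : Prop :=
  ∀ (m : ℕ) (v : Fin m → V) (g : G),
    ς (cp.mon (List.ofFn v) * cp.w g)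
      = (χς g : k) • (cp.mon (List.ofFn fun i => ςhat (v i)) * cp.w g)

/-- `δ₁` is determined by `δ̂₁`, `δ̄₁` via the `(α, ς)`-twisted Leibniz formula. -/
def Delta1Def (cp : CrossedProduct A ρV f) (α : A ≃ₐ[k] A) (ς : Module.End k A)
    (δhat : V →ₗ[k] A) (δbar : G → A) (δ : Module.End k A) : Prop :=
  ∀ (m : ℕ) (v : Fin m → V) (g : G),
    δ (cp.mon (List.ofFn v) * cp.w g)
      = (∑ j : Fin m, α (cp.pre v j) * δhat (v j) * ς (cp.suf v j * cp.w g))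
        + α (cp.mon (List.ofFn v)) * δbar g

/-- `δ₂` is determined by `δ̂₂`, `δ̄₂` via the `(ς ∘ α⁻¹, id)`-twisted Leibniz formula. -/
def Delta2Def (cp : CrossedProduct A ρV f) (α : A ≃ₐ[k] A) (ς : Module.End k A)
    (δhat : V →ₗ[k] A) (δbar : G → A) (δ : Module.End k A) : Prop :=
  ∀ (m : ℕ) (v : Fin m → V) (g : G),
    δ (cp.mon (List.ofFn v) * cp.w g)
      = (∑ j : Fin m, ς (α.symm (cp.pre v j)) * δhat (v j) * (cp.suf v j * cp.w g))
        + ς (α.symm (cp.mon (List.ofFn v))) * δbar g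

/-- There is an `H_q`-braided module algebra structure on `(A, s)` with the
prescribed values of the action on `V` and on the `w_g`. -/
def HasHqModuleStructure (hq : HqData k H q) (cp : CrossedProduct A ρV f)
    (s : H ⊗[k] A ≃ₗ[k] A ⊗[k] H) (ςhat : V →ₗ[k] V) (χς : G → kˣ)
    (δhat1 δhat2 : V →ₗ[k] A) (δbar1 δbar2 : G → A) : Prop :=
  ∃ ρ : H →ₐ[k] Module.End k A, IsModuleAlgebra k H A s ρ
    ∧ (∀ v : V, ρ (hq.σ : H) (cp.ι v) = cp.ι (ςhat v))
    ∧ (∀ g : G, ρ (hq.σ : H) (cp.w g) = (χς g : k) • cp.w g)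
    ∧ (∀ v : V, ρ hq.D₁ (cp.ι v) = δhat1 v)
    ∧ (∀ g : G, ρ hq.D₁ (cp.w g) = δbar1 g)
    ∧ (∀ v : V, ρ hq.D₂ (cp.ι v) = δhat2 v)
    ∧ (∀ g : G, ρ hq.D₂ (cp.w g) = δbar2 g)

end Defs

end Crossed

end Paper

/-!
Give `H_q` the `ℤ`-grading with `σ` of degree `0`, `D₁` of degree `1` and `D₂` of degree `-1`.
The monomials `σ^i D₁^j D₂^m` form a homogeneous basis, products of monomials are multiples
(powers of `q`) of monomials, and `Δ`, `ε` respect degrees, so this is a bialgebra grading. For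
any bialgebra grading, `h ⊗ a ↦ α^{deg h}(a) ⊗ h` on homogeneous `h` is a transposition; it is
good because `deg D₁ + deg D₂ = 0`.

Conversely let `s` be good with `s(D₁ ⊗ a) = α(a) ⊗ D₁`. Since `D₁ ≠ 0` it can be cancelled
from `(s ⊗ H)(H ⊗ s)(D₁ ⊗ v ⊗ a)`: goodness gives `s(D₂ ⊗ a) = α⁻¹(a) ⊗ D₂`, and compatibility
with `Δ(D₁) = D₁ ⊗ σ + 1 ⊗ D₁` gives `s(σ ⊗ a) = a ⊗ σ`. Compatibility with the product of `H_q`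
then forces the formula on every monomial, and the monomials span `H_q`.
-/

namespace Paper

variable {k : Type*} [Field k]

section BraidPast

variable {M N P M' N' P' : Type*}
  [AddCommMonoid M] [AddCommMonoid N] [AddCommMonoid P] [AddCommMonoid M'] [AddCommMonoid N']
  [AddCommMonoid P'] [Module k M] [Module k N] [Module k P] [Module k M'] [Module k N']
  [Module k P']

lemma braidPast_tmul_of_apply_right {f : N ⊗[k] P →ₗ[k] P ⊗[k] N'}
    (g : M ⊗[k] P →ₗ[k] P ⊗[k] M') {m : M} {n : N} {p p' : P} {n' : N'}
    (hf : f (n ⊗ₜ p) = p' ⊗ₜ n') :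
    braidPast f g ((m ⊗ₜ n) ⊗ₜ p) = TensorProduct.assoc k P M' N' (g (m ⊗ₜ p') ⊗ₜ n') := by
  simp [braidPast, hf]

lemma braidPast_tmul_of_apply_left (f : N ⊗[k] P →ₗ[k] P ⊗[k] N')
    {g : M ⊗[k] P →ₗ[k] P ⊗[k] M'} {m : M} {m' : M'} {φ : P →ₗ[k] P}
    (hg : ∀ p, g (m ⊗ₜ p) = φ p ⊗ₜ m') (n : N) (p : P) :
    braidPast f g ((m ⊗ₜ n) ⊗ₜ p)
      = TensorProduct.map φ (TensorProduct.mk k M' N' m') (f (n ⊗ₜ p)) := by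
  simp only [braidPast, LinearMap.coe_comp, Function.comp_apply, LinearEquiv.coe_coe,
    TensorProduct.assoc_tmul, LinearMap.lTensor_tmul]
  induction f (n ⊗ₜ p) using TensorProduct.induction_on with
  | zero => simp
  | tmul p' n' => simp [hg]
  | add x y hx hy => simp only [tmul_add, map_add, hx, hy]

end BraidPast

lemma map_mk_injective {A H : Type*} [AddCommGroup A] [Module k A] [AddCommGroup H]
    [Module k H] (e : A ≃ₗ[k] A) {h : H} (hh : h ≠ 0) :
    Function.Injective (TensorProduct.map e.toLinearMap (TensorProduct.mk k H H h)) := by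
  obtain ⟨f, hf⟩ := Module.Projective.exists_dual_eq_one k hh
  have hinv : TensorProduct.map e.symm.toLinearMap
      ((TensorProduct.lid k H).toLinearMap ∘ₗ f.rTensor H)
      ∘ₗ TensorProduct.map e.toLinearMap (TensorProduct.mk k H H h) = LinearMap.id :=
    TensorProduct.ext' fun a v => by simp [hf]
  exact Function.LeftInverse.injective (LinearMap.congr_fun hinv)

section Twisted

variable {H A : Type*} [Ring H] [Algebra k H] [Ring A] [Algebra k A]

-- The formula of the theorem says `σ^i D₁^j D₂^m ∈ twisted s α (j - m)`.
def twisted (s : H ⊗[k] A →ₗ[k] A ⊗[k] H) (α : A ≃ₐ[k] A) (n : ℤ) : Submodule k H where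
  carrier := {u | ∀ a, s (u ⊗ₜ a) = (α ^ n) a ⊗ₜ u}
  add_mem' hu hv a := by simp [add_tmul, tmul_add, hu a, hv a]
  zero_mem' a := by simp
  smul_mem' c u hu a := by simp [← smul_tmul', hu a]

variable {s : H ⊗[k] A →ₗ[k] A ⊗[k] H} {α : A ≃ₐ[k] A} {u v : H} {p r : ℤ}

lemma braidPast_tmul_of_mem_twisted (hu : u ∈ twisted s α p) (hv : v ∈ twisted s α r)
    (a : A) : braidPast s s ((u ⊗ₜ v) ⊗ₜ a) = (α ^ (p + r)) a ⊗ₜ (u ⊗ₜ v) := by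
  rw [braidPast_tmul_of_apply_right s (hv a), hu, TensorProduct.assoc_tmul, zpow_add,
    AlgEquiv.mul_apply]

lemma apply_tmul_eq_of_braidPast_eq (hu : u ∈ twisted s α p) (hu0 : u ≠ 0) {a a' : A}
    {v' : H} (h : braidPast s s ((u ⊗ₜ v) ⊗ₜ a) = (α ^ p) a' ⊗ₜ (u ⊗ₜ v')) :
    s (v ⊗ₜ a) = a' ⊗ₜ v' := by
  apply map_mk_injective (α ^ p).toLinearEquiv hu0
  rw [← braidPast_tmul_of_apply_left s (φ := (α ^ p).toLinearMap) hu, h]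
  rfl

lemma lTensor_mul'_assoc_tmul (x : A ⊗[k] H) (v : H) :
    (LinearMap.mul' k H).lTensor A (TensorProduct.assoc k A H H (x ⊗ₜ v))
      = (LinearMap.mulRight k v).lTensor A x := by
  induction x using TensorProduct.induction_on with
  | zero => simp
  | tmul a h => simp
  | add x y hx hy => simp only [add_tmul, map_add, hx, hy]

variable (hmul : s ∘ₗ (LinearMap.mul' k H).rTensor A
  = (LinearMap.mul' k H).lTensor A ∘ₗ braidPast s s)
include hmul

lemma apply_mul_tmul (u v : H) (a : A) :
    s ((u * v) ⊗ₜ a) = (LinearMap.mul' k H).lTensor A (braidPast s s ((u ⊗ₜ v) ⊗ₜ a)) := by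
  simpa using LinearMap.congr_fun hmul ((u ⊗ₜ v) ⊗ₜ a)

lemma mul_mem_twisted (hu : u ∈ twisted s α p) (hv : v ∈ twisted s α r) :
    u * v ∈ twisted s α (p + r) := fun a => by
  rw [apply_mul_tmul hmul, braidPast_tmul_of_mem_twisted hu hv]
  simp

lemma pow_mem_twisted (hone : 1 ∈ twisted s α 0) (hu : u ∈ twisted s α p) :
    ∀ j : ℕ, u ^ j ∈ twisted s α (j * p)
  | 0 => by simpa using hone
  | j + 1 => by
    simpa [pow_succ, add_mul] using mul_mem_twisted hmul (pow_mem_twisted hone hu j) hu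

lemma mem_twisted_of_mul_mem {w : H} (huv : u * v ∈ twisted s α (p + r))
    (hv : v ∈ twisted s α r) (hvw : v * w = 1) : u ∈ twisted s α p := fun a => by
  have key := apply_mul_tmul hmul u v ((α ^ (-r)) a)
  rw [braidPast_tmul_of_apply_right s (hv _), huv, lTensor_mul'_assoc_tmul,
    ← AlgEquiv.mul_apply, ← zpow_add, add_neg_cancel_right, ← AlgEquiv.mul_apply, ← zpow_add,
    add_neg_cancel, zpow_zero, AlgEquiv.one_apply] at key
  have := congrArg ((LinearMap.mulRight k w).lTensor A) key
  rwa [LinearMap.lTensor_tmul, ← LinearMap.lTensor_comp_apply, ← LinearMap.mulRight_mul, hvw,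
    LinearMap.mulRight_one, LinearMap.lTensor_id_apply, LinearMap.mulRight_apply, mul_assoc, hvw,
    mul_one, eq_comm] at this

lemma zpow_mem_twisted (hone : 1 ∈ twisted s α 0) {σ : Hˣ} (hσ : (σ : H) ∈ twisted s α p)
    (i : ℤ) : ((σ ^ i : Hˣ) : H) ∈ twisted s α (i * p) := by
  have hσinv : ((σ⁻¹ : Hˣ) : H) ∈ twisted s α (-p) :=
    mem_twisted_of_mul_mem hmul (by simpa using hone) hσ σ.mul_inv
  obtain ⟨n, rfl | rfl⟩ := i.eq_nat_or_neg
  · simpa using pow_mem_twisted hmul hone hσ n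
  · simpa using pow_mem_twisted hmul hone hσinv n

end Twisted

lemma IsTransposition.one_mem_twisted {H A : Type*} [Ring H] [HopfAlgebra k H] [Ring A]
    [Algebra k A] {α : A ≃ₐ[k] A} {s : H ⊗[k] A ≃ₗ[k] A ⊗[k] H} (hs : IsTransposition k H A s) :
    1 ∈ twisted s.toLinearMap α 0 := fun a => by simpa using hs.unit_H a

section TensorPiece

variable {H : Type*} [Ring H] [Algebra k H]

def tensorPiece (G : ℤ → Submodule k H) (n : ℤ) : Submodule k (H ⊗[k] H) :=
  Submodule.span k {t | ∃ p r u v, p + r = n ∧ u ∈ G p ∧ v ∈ G r ∧ t = u ⊗ₜ v}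

variable {G G' : ℤ → Submodule k H}

lemma tmul_mem_tensorPiece {p r n : ℤ} {u v : H} (hu : u ∈ G p) (hv : v ∈ G r)
    (hn : p + r = n) : u ⊗ₜ v ∈ tensorPiece G n :=
  Submodule.subset_span ⟨p, r, u, v, hn, hu, hv, rfl⟩

lemma tensorPiece_mono (h : ∀ n, G n ≤ G' n) (n : ℤ) : tensorPiece G n ≤ tensorPiece G' n :=
  Submodule.span_le.2 <| by
    rintro _ ⟨p, r, u, v, rfl, hu, hv, rfl⟩
    exact tmul_mem_tensorPiece (h p hu) (h r hv) rfl

lemma tensorPiece_mul_le (hG : ∀ p r, G p * G r ≤ G (p + r)) (n n' : ℤ) :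
    tensorPiece G n * tensorPiece G n' ≤ tensorPiece G (n + n') := by
  rw [tensorPiece, tensorPiece, Submodule.span_mul_span]
  refine Submodule.span_le.2 ?_
  rintro _ ⟨_, ⟨p, r, u, v, rfl, hu, hv, rfl⟩, _, ⟨p', r', u', v', rfl, hu', hv', rfl⟩, rfl⟩
  simpa using tmul_mem_tensorPiece (hG p p' (Submodule.mul_mem_mul hu hu'))
    (hG r r' (Submodule.mul_mem_mul hv hv')) (by ring)

lemma pow_mem_tensorPiece (hG : ∀ p r, G p * G r ≤ G (p + r)) (hone : 1 ∈ G 0) {n : ℤ}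
    {t : H ⊗[k] H} (ht : t ∈ tensorPiece G n) : ∀ j : ℕ, t ^ j ∈ tensorPiece G (j * n)
  | 0 => by simpa [Algebra.TensorProduct.one_def] using tmul_mem_tensorPiece hone hone rfl
  | j + 1 => by
    simpa [pow_succ, add_mul] using
      tensorPiece_mul_le hG _ _ (Submodule.mul_mem_mul (pow_mem_tensorPiece hG hone ht j) ht)

variable {A : Type*} [Ring A] [Algebra k A] {s : H ⊗[k] A →ₗ[k] A ⊗[k] H} {α : A ≃ₐ[k] A}

lemma braidPast_tmul_of_mem_tensorPiece {n : ℤ} {t : H ⊗[k] H}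
    (ht : t ∈ tensorPiece (twisted s α) n) (a : A) :
    braidPast s s (t ⊗ₜ a) = (α ^ n) a ⊗ₜ t := by
  induction ht using Submodule.span_induction with
  | mem t ht =>
    obtain ⟨p, r, u, v, rfl, hu, hv, rfl⟩ := ht
    exact braidPast_tmul_of_mem_twisted hu hv a
  | zero => simp
  | add t t' _ _ ht ht' => rw [add_tmul, map_add, ht, ht', tmul_add]
  | smul c t _ ht => rw [← smul_tmul', map_smul, ht, tmul_smul]

end TensorPiece

def gradedPiece {H ι : Type*} [AddCommMonoid H] [Module k H] (b : Module.Basis ι k H)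
    (d : ι → ℤ) (n : ℤ) : Submodule k H :=
  Submodule.span k (b '' {x | d x = n})

section GradedTransposition

variable {H A ι : Type*} [Ring H] [HopfAlgebra k H] [Ring A] [Algebra k A]
  (b : Module.Basis ι k H) (d : ι → ℤ) (α : A ≃ₐ[k] A)

structure IsBialgebraGrading : Prop where
  one_mem : 1 ∈ gradedPiece b d 0
  mul_le : ∀ p r, gradedPiece b d p * gradedPiece b d r ≤ gradedPiece b d (p + r)
  counit_basis : ∀ x, d x ≠ 0 → Coalgebra.counit (R := k) (b x) = 0
  comul_basis : ∀ x, Coalgebra.comul (R := k) (b x) ∈ tensorPiece (gradedPiece b d) (d x)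

lemma ext_basis_tmul {X : Type*} [AddCommMonoid X] [Module k X] {f g : H ⊗[k] A →ₗ[k] X}
    (h : ∀ x a, f (b x ⊗ₜ a) = g (b x ⊗ₜ a)) : f = g :=
  TensorProduct.ext (b.ext fun x => LinearMap.ext fun a => by simpa using h x a)

lemma ext_basis_basis_tmul {X : Type*} [AddCommMonoid X] [Module k X]
    {f g : (H ⊗[k] H) ⊗[k] A →ₗ[k] X}
    (h : ∀ x y a, f ((b x ⊗ₜ b y) ⊗ₜ a) = g ((b x ⊗ₜ b y) ⊗ₜ a)) : f = g :=
  TensorProduct.ext (TensorProduct.ext (b.ext fun x => b.ext fun y =>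
    LinearMap.ext fun a => by simpa using h x y a))

lemma ext_basis_tmul_tmul {X : Type*} [AddCommMonoid X] [Module k X]
    {f g : H ⊗[k] (A ⊗[k] A) →ₗ[k] X}
    (h : ∀ x a a', f (b x ⊗ₜ (a ⊗ₜ a')) = g (b x ⊗ₜ (a ⊗ₜ a'))) : f = g :=
  TensorProduct.ext (b.ext fun x => TensorProduct.ext' fun a a' => by simpa using h x a a')

def gradedTwist : H ⊗[k] A →ₗ[k] H ⊗[k] A :=
  TensorProduct.lift (b.constr k fun x => TensorProduct.mk k H A (b x) ∘ₗ (α ^ d x).toLinearMap)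

lemma gradedTwist_basis_tmul (x : ι) (a : A) :
    gradedTwist b d α (b x ⊗ₜ a) = b x ⊗ₜ (α ^ d x) a := by
  simp [gradedTwist]

lemma gradedTwist_comp_inv : gradedTwist b d α ∘ₗ gradedTwist b d α⁻¹ = LinearMap.id :=
  ext_basis_tmul b fun x a => by simp [gradedTwist_basis_tmul]

def gradedTransposition : H ⊗[k] A ≃ₗ[k] A ⊗[k] H :=
  (show H ⊗[k] A ≃ₗ[k] H ⊗[k] A from .ofLinearMap (gradedTwist b d α) (gradedTwist b d α⁻¹)
    (gradedTwist_comp_inv b d α) (by simpa using gradedTwist_comp_inv b d α⁻¹)).trans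
    (TensorProduct.comm k H A)

lemma gradedTransposition_basis_tmul (x : ι) (a : A) :
    gradedTransposition b d α (b x ⊗ₜ a) = (α ^ d x) a ⊗ₜ b x := by
  simp [gradedTransposition, gradedTwist_basis_tmul]

lemma gradedPiece_le_twisted (n : ℤ) :
    gradedPiece b d n ≤ twisted (gradedTransposition b d α).toLinearMap α n :=
  Submodule.span_le.2 <| by
    rintro _ ⟨x, rfl, rfl⟩ a
    exact gradedTransposition_basis_tmul b d α x a

lemma basis_mem_twisted (x : ι) :
    b x ∈ twisted (gradedTransposition b d α).toLinearMap α (d x) :=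
  gradedPiece_le_twisted b d α _ (Submodule.subset_span ⟨x, rfl, rfl⟩)

variable {b d} in
theorem isTransposition_gradedTransposition (hb : IsBialgebraGrading b d) :
    IsTransposition k H A (gradedTransposition b d α) where
  unit_H a := by simpa using gradedPiece_le_twisted b d α 0 hb.one_mem a
  mul_H := ext_basis_basis_tmul b fun x y a => by
    have hxy := gradedPiece_le_twisted b d α _
      (hb.mul_le _ _ (Submodule.mul_mem_mul (Submodule.subset_span ⟨x, rfl, rfl⟩)
        (Submodule.subset_span ⟨y, rfl, rfl⟩)))
    simpa [braidPast_tmul_of_mem_twisted (basis_mem_twisted b d α x)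
      (basis_mem_twisted b d α y)] using hxy a
  counit_compat := ext_basis_tmul b fun x a => by
    by_cases hx : d x = 0
    · simp [gradedTransposition_basis_tmul, hx]
    · simp [gradedTransposition_basis_tmul, hb.counit_basis x hx]
  comul_compat := ext_basis_tmul b fun x a => by
    simp [gradedTransposition_basis_tmul, braidPast_tmul_of_mem_tensorPiece
      (tensorPiece_mono (gradedPiece_le_twisted b d α) _ (hb.comul_basis x))]
  unit_A h := by
    have : (gradedTransposition b d α).toLinearMap ∘ₗ (TensorProduct.mk k H A).flip 1
        = TensorProduct.mk k A H 1 :=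
      b.ext fun x => by simp [gradedTransposition_basis_tmul]
    simpa using LinearMap.congr_fun this h
  mul_A := ext_basis_tmul_tmul b fun x a a' => by
    simp [braidUnder, gradedTransposition_basis_tmul]
  braid_compat := ext_basis_basis_tmul b fun x y a => by
    simp [braidPast_tmul_of_mem_twisted (basis_mem_twisted b d α x) (basis_mem_twisted b d α y),
      braidPast_tmul_of_mem_twisted (basis_mem_twisted b d α y) (basis_mem_twisted b d α x),
      add_comm]

end GradedTransposition

section QCommutation

variable {R : Type*} [Ring R] [Algebra k R] {c : k} {x y : R}

lemma pow_mul_eq_smul_of_mul_eq_smul (h : x * y = c • (y * x)) :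
    ∀ j : ℕ, x ^ j * y = c ^ j • (y * x ^ j)
  | 0 => by simp
  | j + 1 => by
    rw [pow_succ, mul_assoc, h, mul_smul_comm, ← mul_assoc, pow_mul_eq_smul_of_mul_eq_smul h j,
      smul_mul_assoc, smul_smul, pow_succ', mul_assoc, ← pow_succ]

lemma mul_pow_eq_smul_of_mul_eq_smul (h : x * y = c • (y * x)) (n : ℕ) :
    x * y ^ n = c ^ n • (y ^ n * x) := by
  have := SemiconjBy.pow_right (show SemiconjBy x y (c • y) by rwa [SemiconjBy, smul_mul_assoc]) n
  rwa [SemiconjBy, smul_pow, smul_mul_assoc] at this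

lemma mul_inv_eq_smul_of_mul_eq_smul (hc : c ≠ 0) {u : Rˣ} (h : x * u = c • (u * x)) :
    x * ↑u⁻¹ = c⁻¹ • (↑u⁻¹ * x) := by
  have : (u : R) * (x * ↑u⁻¹) = c⁻¹ • x := by
    rw [← mul_assoc, ← inv_smul_smul₀ hc ((u : R) * x), ← h, smul_mul_assoc, mul_assoc,
      Units.mul_inv, mul_one]
  rw [← mul_smul_comm, ← this, ← mul_assoc, Units.inv_mul, one_mul]

lemma mul_zpow_eq_smul_of_mul_eq_smul (hc : c ≠ 0) {u : Rˣ} (h : x * u = c • (u * x)) (i : ℤ) :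
    x * ↑(u ^ i) = c ^ i • (↑(u ^ i) * x) := by
  obtain ⟨n, rfl | rfl⟩ := i.eq_nat_or_neg
  · simpa using mul_pow_eq_smul_of_mul_eq_smul h n
  · simpa using mul_pow_eq_smul_of_mul_eq_smul (mul_inv_eq_smul_of_mul_eq_smul hc h) n

end QCommutation

namespace HqData

variable {H : Type*} [Ring H] [HopfAlgebra k H] {q : k} (hq : HqData k H q)

def monomial (i : ℤ) (j m : ℕ) : H := ((hq.σ ^ i : Hˣ) : H) * hq.D₁ ^ j * hq.D₂ ^ m

lemma monomial_mul (hq0 : q ≠ 0) (i : ℤ) (j m : ℕ) (i' : ℤ) (j' m' : ℕ) :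
    hq.monomial i j m * hq.monomial i' j' m'
      = (q ^ i') ^ (j + m) • hq.monomial (i + i') (j + j') (m + m') := by
  have hσ : ∀ x : H, x * hq.σ = q • (hq.σ * x) → ∀ n : ℕ,
      x ^ n * ↑(hq.σ ^ i') = (q ^ i') ^ n • (↑(hq.σ ^ i') * x ^ n) := fun x hx =>
    pow_mul_eq_smul_of_mul_eq_smul (mul_zpow_eq_smul_of_mul_eq_smul hq0 hx i')
  have h₁ := hσ hq.D₁ hq.σD₁.symm j
  have h₂ := hσ hq.D₂ hq.σD₂.symm m
  have h₂₁ : hq.D₂ ^ m * hq.D₁ ^ j' = hq.D₁ ^ j' * hq.D₂ ^ m :=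
    (Commute.pow_pow (Commute.symm hq.D_comm) m j').eq
  calc hq.monomial i j m * hq.monomial i' j' m'
      = ↑(hq.σ ^ i) * hq.D₁ ^ j * (hq.D₂ ^ m * ↑(hq.σ ^ i')) * hq.D₁ ^ j' * hq.D₂ ^ m' := by
        simp only [monomial, mul_assoc]
    _ = (q ^ i') ^ m • (↑(hq.σ ^ i) * (hq.D₁ ^ j * ↑(hq.σ ^ i')) * (hq.D₂ ^ m * hq.D₁ ^ j')
          * hq.D₂ ^ m') := by
        rw [h₂]; simp only [mul_smul_comm, smul_mul_assoc, mul_assoc]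
    _ = (q ^ i') ^ (j + m) • hq.monomial (i + i') (j + j') (m + m') := by
        rw [h₁, h₂₁]
        simp only [monomial, mul_smul_comm, smul_mul_assoc, smul_smul, zpow_add, Units.val_mul,
          pow_add, mul_assoc, mul_comm ((q ^ i') ^ m)]

section Uniqueness

variable {A : Type*} [Ring A] [Algebra k A] {α : A ≃ₐ[k] A} {s : H ⊗[k] A ≃ₗ[k] A ⊗[k] H}
  (hD₁0 : hq.D₁ ≠ 0) (hD₁ : hq.D₁ ∈ twisted s.toLinearMap α 1)
include hD₁0 hD₁

lemma D₂_mem_twisted (hgood : GoodTransposition k H A hq s) :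
    hq.D₂ ∈ twisted s.toLinearMap α (-1) := fun a =>
  apply_tmul_eq_of_braidPast_eq hD₁ hD₁0 <| by simpa using hgood a

lemma σ_mem_twisted (hs : IsTransposition k H A s) : (hq.σ : H) ∈ twisted s.toLinearMap α 0 :=
  fun a => by
  have h := LinearMap.congr_fun hs.comul_compat (hq.D₁ ⊗ₜ a)
  simp only [LinearMap.comp_apply, LinearMap.rTensor_tmul, hq.comul_D₁, add_tmul, map_add,
    braidPast_tmul_of_mem_twisted hs.one_mem_twisted hD₁, hD₁ a, LinearMap.lTensor_tmul,
    tmul_add] at h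
  exact apply_tmul_eq_of_braidPast_eq hD₁ hD₁0 (by simpa using (add_right_cancel h).symm)

lemma monomial_mem_twisted (hs : IsTransposition k H A s) (hgood : GoodTransposition k H A hq s)
    (i : ℤ) (j m : ℕ) : hq.monomial i j m ∈ twisted s.toLinearMap α (j - m) := by
  have hσ := zpow_mem_twisted hs.mul_H hs.one_mem_twisted (σ_mem_twisted hq hD₁0 hD₁ hs) i
  have hD₁j := pow_mem_twisted hs.mul_H hs.one_mem_twisted hD₁ j
  have hD₂m := pow_mem_twisted hs.mul_H hs.one_mem_twisted (D₂_mem_twisted hq hD₁0 hD₁ hgood) m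
  simpa [monomial, sub_eq_add_neg] using
    mul_mem_twisted hs.mul_H (mul_mem_twisted hs.mul_H hσ hD₁j) hD₂m

end Uniqueness

lemma isGroupLikeElem_σ_zpow (i : ℤ) : IsGroupLikeElem k ((hq.σ ^ i : Hˣ) : H) := by
  have hσ : IsGroupLikeElem k (hq.σ : H) := ⟨hq.counit_σ, hq.comul_σ⟩
  obtain ⟨n, rfl | rfl⟩ := i.eq_nat_or_neg
  · simpa using hσ.pow (n := n)
  · simpa using hσ.unitsInv.pow (n := n)

lemma counit_monomial (i : ℤ) (j m : ℕ) :
    Coalgebra.counit (R := k) (hq.monomial i j m) = 0 ^ (j + m) := by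
  simp [monomial, Bialgebra.counit_mul, (hq.isGroupLikeElem_σ_zpow i).counit_eq_one,
    hq.counit_D₁, hq.counit_D₂, pow_add]

-- In the root-of-unity case monomials with an exponent `≥ l` vanish instead of being basis
-- vectors, so `monomial_mem'` only asks for membership in the graded piece.
structure MonomialBasis where
  ι : Type
  basis : Module.Basis ι k H
  exponent : ι → ℤ × ℕ × ℕ
  basis_eq : ∀ x, basis x = hq.monomial (exponent x).1 (exponent x).2.1 (exponent x).2.2
  monomial_mem' : ∀ (i : ℤ) (j m : ℕ), hq.monomial i j m
    ∈ gradedPiece basis (fun x => ((exponent x).2.1 : ℤ) - (exponent x).2.2) (j - m)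
  D₁_ne_zero : hq.D₁ ≠ 0

namespace MonomialBasis

variable {hq} (B : hq.MonomialBasis)

def degree (x : B.ι) : ℤ := (B.exponent x).2.1 - (B.exponent x).2.2

lemma monomial_mem (i : ℤ) (j m : ℕ) :
    hq.monomial i j m ∈ gradedPiece B.basis B.degree (j - m) :=
  B.monomial_mem' i j m

lemma D₁_mem : hq.D₁ ∈ gradedPiece B.basis B.degree 1 := by
  simpa [monomial] using B.monomial_mem 0 1 0

lemma D₂_mem : hq.D₂ ∈ gradedPiece B.basis B.degree (-1) := by
  simpa [monomial] using B.monomial_mem 0 0 1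

lemma one_mem : (1 : H) ∈ gradedPiece B.basis B.degree 0 := by
  simpa [monomial] using B.monomial_mem 0 0 0

lemma σ_zpow_mem (i : ℤ) : ((hq.σ ^ i : Hˣ) : H) ∈ gradedPiece B.basis B.degree 0 := by
  simpa [monomial] using B.monomial_mem i 0 0

lemma mul_le (hq0 : q ≠ 0) (p r : ℤ) :
    gradedPiece B.basis B.degree p * gradedPiece B.basis B.degree r
      ≤ gradedPiece B.basis B.degree (p + r) := by
  rw [gradedPiece, gradedPiece, Submodule.span_mul_span]
  refine Submodule.span_le.2 ?_
  rintro _ ⟨_, ⟨x, rfl, rfl⟩, _, ⟨y, rfl, rfl⟩, rfl⟩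
  change B.basis x * B.basis y ∈ _
  rw [B.basis_eq, B.basis_eq, monomial_mul hq hq0]
  refine Submodule.smul_mem _ _ ?_
  convert B.monomial_mem _ _ _ using 2
  simp only [degree]
  push_cast
  ring

lemma counit_basis (x : B.ι) (hx : B.degree x ≠ 0) :
    Coalgebra.counit (R := k) (B.basis x) = 0 := by
  have hjm : (B.exponent x).2.1 + (B.exponent x).2.2 ≠ 0 := fun h => hx <| by
    simp only [degree]; omega
  rw [B.basis_eq, counit_monomial, zero_pow hjm]

lemma comul_basis (hq0 : q ≠ 0) (x : B.ι) : Coalgebra.comul (R := k) (B.basis x)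
    ∈ tensorPiece (gradedPiece B.basis B.degree) (B.degree x) := by
  have hmul := B.mul_le hq0
  have hσ : Coalgebra.comul (R := k) ((hq.σ ^ (B.exponent x).1 : Hˣ) : H)
      ∈ tensorPiece (gradedPiece B.basis B.degree) 0 := by
    rw [(hq.isGroupLikeElem_σ_zpow _).comul_eq_tmul_self]
    exact tmul_mem_tensorPiece (B.σ_zpow_mem _) (B.σ_zpow_mem _) rfl
  have hσ₁ : (hq.σ : H) ∈ gradedPiece B.basis B.degree 0 := by simpa using B.σ_zpow_mem 1
  have hD₁ : Coalgebra.comul (R := k) hq.D₁ ∈ tensorPiece (gradedPiece B.basis B.degree) 1 := by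
    rw [hq.comul_D₁]
    exact add_mem (tmul_mem_tensorPiece B.D₁_mem hσ₁ rfl)
      (tmul_mem_tensorPiece B.one_mem B.D₁_mem rfl)
  have hD₂ : Coalgebra.comul (R := k) hq.D₂ ∈ tensorPiece (gradedPiece B.basis B.degree) (-1) := by
    rw [hq.comul_D₂]
    exact add_mem (tmul_mem_tensorPiece B.D₂_mem B.one_mem rfl)
      (tmul_mem_tensorPiece hσ₁ B.D₂_mem rfl)
  have := tensorPiece_mul_le hmul _ _ (Submodule.mul_mem_mul
    (tensorPiece_mul_le hmul _ _ (Submodule.mul_mem_mul hσ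
      (pow_mem_tensorPiece hmul B.one_mem hD₁ (B.exponent x).2.1)))
    (pow_mem_tensorPiece hmul B.one_mem hD₂ (B.exponent x).2.2))
  rw [B.basis_eq, monomial, Bialgebra.comul_mul, Bialgebra.comul_mul, Bialgebra.comul_pow,
    Bialgebra.comul_pow]
  simpa [degree, sub_eq_add_neg] using this

lemma isBialgebraGrading (hq0 : q ≠ 0) : IsBialgebraGrading B.basis B.degree :=
  ⟨B.one_mem, B.mul_le hq0, B.counit_basis, B.comul_basis hq0⟩

variable {A : Type*} [Ring A] [Algebra k A] (α : A ≃ₐ[k] A)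

lemma goodTransposition : GoodTransposition k H A hq (gradedTransposition B.basis B.degree α) :=
  fun a => by
  simpa using braidPast_tmul_of_mem_twisted (gradedPiece_le_twisted _ _ α _ B.D₁_mem)
    (gradedPiece_le_twisted _ _ α _ B.D₂_mem) a

lemma gradedTransposition_D₁_tmul (a : A) :
    gradedTransposition B.basis B.degree α (hq.D₁ ⊗ₜ a) = α a ⊗ₜ hq.D₁ := by
  simpa using gradedPiece_le_twisted _ _ α _ B.D₁_mem a

include B in
lemma ext_monomial {X : Type*} [AddCommMonoid X] [Module k X] {f g : H ⊗[k] A →ₗ[k] X}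
    (h : ∀ i j m a, f (hq.monomial i j m ⊗ₜ a) = g (hq.monomial i j m ⊗ₜ a)) : f = g :=
  ext_basis_tmul B.basis fun x a => by rw [B.basis_eq]; exact h _ _ _ a

end MonomialBasis

def MonomialBasis.ofBasis (b : Module.Basis (ℤ × ℕ × ℕ) k H)
    (hb : ∀ i j m, b (i, j, m) = hq.monomial i j m) : hq.MonomialBasis where
  ι := ℤ × ℕ × ℕ
  basis := b
  exponent := id
  basis_eq x := hb x.1 x.2.1 x.2.2
  monomial_mem' i j m := hb i j m ▸ Submodule.subset_span ⟨(i, j, m), rfl, rfl⟩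
  D₁_ne_zero := by simpa [monomial] using (hb 0 1 0).symm.trans_ne (b.ne_zero _)

def MonomialBasis.ofTruncatedBasis {l : ℕ} (hl : 2 ≤ l) (hD₁ : hq.D₁ ^ l = 0)
    (hD₂ : hq.D₂ ^ l = 0) (b : Module.Basis (ℤ × Fin l × Fin l) k H)
    (hb : ∀ i (j m : Fin l), b (i, j, m) = hq.monomial i j m) : hq.MonomialBasis where
  ι := ℤ × Fin l × Fin l
  basis := b
  exponent x := (x.1, x.2.1, x.2.2)
  basis_eq x := hb x.1 x.2.1 x.2.2
  monomial_mem' i j m := by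
    by_cases hjm : j < l ∧ m < l
    · exact hb i ⟨j, hjm.1⟩ ⟨m, hjm.2⟩ ▸
        Submodule.subset_span ⟨(i, ⟨j, hjm.1⟩, ⟨m, hjm.2⟩), rfl, rfl⟩
    · convert Submodule.zero_mem _
      rcases not_and_or.1 hjm with hj | hm
      · simp [monomial, pow_eq_zero_of_le (not_lt.1 hj) hD₁]
      · simp [monomial, pow_eq_zero_of_le (not_lt.1 hm) hD₂]
  D₁_ne_zero := by
    simpa [monomial] using (hb 0 ⟨1, by omega⟩ ⟨0, by omega⟩).symm.trans_ne (b.ne_zero _)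

lemma nonempty_monomialBasis : Nonempty hq.MonomialBasis := by
  by_cases hroot : ∃ l, 2 ≤ l ∧ IsPrimitiveRoot q l
  · obtain ⟨l, hl, hq_l⟩ := hroot
    obtain ⟨hD₁, hD₂, b, hb⟩ := hq.basis_root l hl hq_l
    exact ⟨.ofTruncatedBasis hq hl hD₁ hD₂ b hb⟩
  · obtain ⟨b, hb⟩ := hq.basis_generic fun l hl hq_l => hroot ⟨l, hl, hq_l⟩
    exact ⟨.ofBasis hq b hb⟩

end HqData

end Paper

open Paper in
/-- For every algebra automorphism `α` of `A` there is exactly one good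
transposition `s` of `H_q` on `A` with `s(D₁ ⊗ a) = α(a) ⊗ D₁`, and it is given by
`s(σ^i D₁^j D₂^m ⊗ a) = α^{j-m}(a) ⊗ σ^i D₁^j D₂^m`. -/
theorem statement_4 {k : Type*} [Field k] {q : k} (hq0 : q ≠ 0)
    {H : Type*} [Ring H] [HopfAlgebra k H] (hq : HqData k H q)
    {A : Type*} [Ring A] [Algebra k A] (α : A ≃ₐ[k] A) :
    (∃! s : H ⊗[k] A ≃ₗ[k] A ⊗[k] H,
        IsTransposition k H A s ∧ GoodTransposition k H A hq s
          ∧ ∀ a : A, s (hq.D₁ ⊗ₜ[k] a) = α a ⊗ₜ[k] hq.D₁)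
    ∧ ∀ s : H ⊗[k] A ≃ₗ[k] A ⊗[k] H,
        IsTransposition k H A s → GoodTransposition k H A hq s →
        (∀ a : A, s (hq.D₁ ⊗ₜ[k] a) = α a ⊗ₜ[k] hq.D₁) →
        ∀ (i : ℤ) (j m : ℕ) (a : A),
          s ((((hq.σ ^ i : Hˣ) : H) * hq.D₁ ^ j * hq.D₂ ^ m) ⊗ₜ[k] a)
            = ((α ^ ((j : ℤ) - (m : ℤ))) a)
                ⊗ₜ[k] (((hq.σ ^ i : Hˣ) : H) * hq.D₁ ^ j * hq.D₂ ^ m) := by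
  obtain ⟨B⟩ := hq.nonempty_monomialBasis
  have formula : ∀ s : H ⊗[k] A ≃ₗ[k] A ⊗[k] H, IsTransposition k H A s →
      GoodTransposition k H A hq s → (∀ a : A, s (hq.D₁ ⊗ₜ[k] a) = α a ⊗ₜ[k] hq.D₁) →
      ∀ (i : ℤ) (j m : ℕ), hq.monomial i j m ∈ twisted s.toLinearMap α (j - m) :=
    fun s hs hgood hD₁ =>
      hq.monomial_mem_twisted B.D₁_ne_zero (fun a => by simpa using hD₁ a) hs hgood
  refine ⟨⟨gradedTransposition B.basis B.degree α, ⟨isTransposition_gradedTransposition α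
    (B.isBialgebraGrading hq0), B.goodTransposition α, B.gradedTransposition_D₁_tmul α⟩, ?_⟩,
    fun s hs hgood hD₁ i j m a => formula s hs hgood hD₁ i j m a⟩
  rintro s ⟨hs, hgood, hD₁⟩
  refine LinearEquiv.toLinearMap_injective (B.ext_monomial fun i j m a => ?_)
  rw [formula s hs hgood hD₁ i j m a, gradedPiece_le_twisted _ _ α _ (B.monomial_mem i j m) a]
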